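/- arXiv:0708.1155 — 2 statements merged into one kernel-verified Lean document; each statement's English description precedes it below -/
import Mathlib

section
/- Let μ < 1/4. (a) If u is a small local sub-harmonic of L_μ then limsup_{δ(x)→0} u(x)/δ(x)^{β₊} < ∞. (b) If U is a large local sub-harmonic of L_μ then limsup_{δ(x)→0} U(x)/δ(x)^{β₋} > 0. -/
open Set Metric MeasureTheory Real

noncomputable section

/-- Distance to the boundary of `Ω`. -/
def bdist {N : ℕ} (Ω : Set (EuclideanSpace ℝ (Fin N))) (x : EuclideanSpace ℝ (Fin N)) : ℝ :=
  Metric.infDist x Ωᶜ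

/-- The collar `Ω_ρ = {x ∈ Ω : δ(x) < ρ}`. -/
def collar {N : ℕ} (Ω : Set (EuclideanSpace ℝ (Fin N))) (ρ : ℝ) :
    Set (EuclideanSpace ℝ (Fin N)) :=
  {x ∈ Ω | bdist Ω x < ρ}

/-- The ring `Ω_{ε,ρ} = {x ∈ Ω : ε < δ(x) < ρ}`. -/
def ring' {N : ℕ} (Ω : Set (EuclideanSpace ℝ (Fin N))) (ε ρ : ℝ) :
    Set (EuclideanSpace ℝ (Fin N)) :=
  {x ∈ Ω | ε < bdist Ω x ∧ bdist Ω x < ρ}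

/-- The Laplacian. -/
def lap {N : ℕ} (f : EuclideanSpace ℝ (Fin N) → ℝ) (x : EuclideanSpace ℝ (Fin N)) : ℝ :=
  ∑ i : Fin N, fderiv ℝ (fun y => fderiv ℝ f y (EuclideanSpace.single i 1)) x
    (EuclideanSpace.single i 1)

/-- `ρ₀` is a good collar width: `δ` is `C²` on `Ω_{ρ₀}`, `|∇δ| = 1` there, `Δδ` bounded. -/
def GoodCollar {N : ℕ} (Ω : Set (EuclideanSpace ℝ (Fin N))) (ρ₀ : ℝ) : Prop :=
  0 < ρ₀ ∧ ContDiffOn ℝ 2 (bdist Ω) (collar Ω ρ₀) ∧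
    (∀ x ∈ collar Ω ρ₀, ‖gradient (bdist Ω) x‖ = 1) ∧
    ∃ M, ∀ x ∈ collar Ω ρ₀, |lap (bdist Ω) x| ≤ M

/-- A super-harmonic of `L_μ = -Δ - μ/δ²` on `G`. -/
def SuperHarm {N : ℕ} (Ω : Set (EuclideanSpace ℝ (Fin N))) (μ : ℝ)
    (G : Set (EuclideanSpace ℝ (Fin N))) (h : EuclideanSpace ℝ (Fin N) → ℝ) : Prop :=
  ContDiffOn ℝ 2 h G ∧ ∀ x ∈ G, 0 ≤ -(lap h x) - μ / (bdist Ω x) ^ 2 * h x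

/-- A sub-harmonic of `L_μ = -Δ - μ/δ²` on `G`. -/
def SubHarm {N : ℕ} (Ω : Set (EuclideanSpace ℝ (Fin N))) (μ : ℝ)
    (G : Set (EuclideanSpace ℝ (Fin N))) (h : EuclideanSpace ℝ (Fin N) → ℝ) : Prop :=
  ContDiffOn ℝ 2 h G ∧ ∀ x ∈ G, -(lap h x) - μ / (bdist Ω x) ^ 2 * h x ≤ 0

/-- A positive local super-harmonic of `L_μ`, defined on the collar `Ω_σ`. -/
def PosSuperHarmOn {N : ℕ} (Ω : Set (EuclideanSpace ℝ (Fin N))) (μ σ : ℝ)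
    (h : EuclideanSpace ℝ (Fin N) → ℝ) : Prop :=
  SuperHarm Ω μ (collar Ω σ) h ∧ ∀ x ∈ collar Ω σ, 0 < h x

/-- A sub-solution of `(*)`: `-Δu - (μ/δ²)u + u^p/δ^s = 0` on `G`. -/
def SubSol {N : ℕ} (Ω : Set (EuclideanSpace ℝ (Fin N))) (μ s p : ℝ)
    (G : Set (EuclideanSpace ℝ (Fin N))) (u : EuclideanSpace ℝ (Fin N) → ℝ) : Prop :=
  ContDiffOn ℝ 2 u G ∧ (∀ x ∈ G, 0 ≤ u x) ∧
    ∀ x ∈ G, -(lap u x) - μ / (bdist Ω x) ^ 2 * u x + (u x) ^ p / (bdist Ω x) ^ s ≤ 0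

/-- A super-solution of `(*)` on `G`. -/
def SuperSol {N : ℕ} (Ω : Set (EuclideanSpace ℝ (Fin N))) (μ s p : ℝ)
    (G : Set (EuclideanSpace ℝ (Fin N))) (u : EuclideanSpace ℝ (Fin N) → ℝ) : Prop :=
  ContDiffOn ℝ 2 u G ∧ (∀ x ∈ G, 0 < u x) ∧
    ∀ x ∈ G, 0 ≤ -(lap u x) - μ / (bdist Ω x) ^ 2 * u x + (u x) ^ p / (bdist Ω x) ^ s

/-- A regularized distance `(d, c)` on `Ω`. -/
def RegDist {N : ℕ} (Ω : Set (EuclideanSpace ℝ (Fin N))) (d : EuclideanSpace ℝ (Fin N) → ℝ)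
    (c : ℝ) : Prop :=
  1 ≤ c ∧ ContDiffOn ℝ 2 d Ω ∧ (∀ x ∈ Ω, 0 < d x) ∧
    (∀ x ∈ Ω, c⁻¹ * bdist Ω x ≤ d x ∧ d x ≤ c * bdist Ω x) ∧
    (∀ x ∈ Ω, ‖gradient d x‖ ≤ c) ∧ (∀ x ∈ Ω, |lap d x| ≤ c / d x)

/-- A local sub-harmonic `u` (defined on `Ω_ρ`) is *small* if
`limsup_{δ(x)→0} u(x)/h(x) < ∞` for every positive local super-harmonic `h` of `L_μ`. -/
def SmallSubHarm {N : ℕ} (Ω : Set (EuclideanSpace ℝ (Fin N))) (μ : ℝ)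
    (u : EuclideanSpace ℝ (Fin N) → ℝ) (ρ : ℝ) : Prop :=
  ∀ σ, 0 < σ → ∀ h : EuclideanSpace ℝ (Fin N) → ℝ, PosSuperHarmOn Ω μ σ h →
    ∃ C : ℝ, ∃ τ, 0 < τ ∧ τ ≤ min ρ σ ∧ ∀ x ∈ collar Ω τ, u x / h x ≤ C

/-- A local sub-harmonic `u` (defined on `Ω_ρ`) is *large* if
`limsup_{δ(x)→0} u(x)/h(x) > 0` for every positive local super-harmonic `h` of `L_μ`. -/
def LargeSubHarm {N : ℕ} (Ω : Set (EuclideanSpace ℝ (Fin N))) (μ : ℝ)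
    (u : EuclideanSpace ℝ (Fin N) → ℝ) (ρ : ℝ) : Prop :=
  ∀ σ, 0 < σ → ∀ h : EuclideanSpace ℝ (Fin N) → ℝ, PosSuperHarmOn Ω μ σ h →
    ∃ c, 0 < c ∧ ∀ τ, 0 < τ → τ ≤ min ρ σ → ∃ x ∈ collar Ω τ, c ≤ u x / h x

/-!
Let `a` be a root of `a (a - 1) + μ = 0`, `a < b < a + 1` and `|s| ≤ 1`. Since `|∇δ| = 1`,
`L_μ (δ^a + s δ^b) = -s (b (b - 1) + μ) δ^(b-2) - (a δ^(a-1) + s b δ^(b-1)) Δδ`, and because `Δδ`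
is bounded the last term is `O((δ^(a+1-b) + δ) δ^(b-2))`. So whenever `s (b (b - 1) + μ) < 0`,
`δ^a + s δ^b` is a positive super-harmonic on a thin collar. For `b = a + ε` one has
`b (b - 1) + μ = ε (2a - 1 + ε)`, which is positive for `a = β₊` and negative for `a = β₋`,
`ε < 2 √(1/4 - μ)`. So with `a = β₊`, `s = -1` we get a super-harmonic below `δ^β₊`, and smallness
of `u` gives `u ≤ C δ^β₊`; with `a = β₋`, `s = 1` one above `δ^β₋`, and largeness of `U` gives
`U ≥ c δ^β₋` at points arbitrarily close to the boundary.
-/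

open Filter Topology

section Profile

variable {a b s t : ℝ}

lemma hasDerivAt_rpow_add_mul_rpow (ht : 0 < t) :
    HasDerivAt (fun r : ℝ => r ^ a + s * r ^ b) (a * t ^ (a - 1) + s * (b * t ^ (b - 1))) t :=
  (Real.hasDerivAt_rpow_const (Or.inl ht.ne')).add
    ((Real.hasDerivAt_rpow_const (Or.inl ht.ne')).const_mul s)

lemma hasDerivAt_deriv_rpow_add_mul_rpow (ht : 0 < t) :
    HasDerivAt (fun r : ℝ => a * r ^ (a - 1) + s * (b * r ^ (b - 1)))
      (a * ((a - 1) * t ^ (a - 2)) + s * (b * ((b - 1) * t ^ (b - 2)))) t := by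
  have h := ((Real.hasDerivAt_rpow_const (p := a - 1) (Or.inl ht.ne')).const_mul a).add
    (((Real.hasDerivAt_rpow_const (p := b - 1) (Or.inl ht.ne')).const_mul b).const_mul s)
  simp only [sub_sub, one_add_one_eq_two] at h
  exact h

lemma rpow_add_mul_rpow_pos (ht₀ : 0 < t) (ht₁ : t < 1) (hab : a < b) (hs : |s| ≤ 1) :
    0 < t ^ a + s * t ^ b := by
  have hlt : t ^ b < t ^ a := Real.rpow_lt_rpow_of_exponent_gt ht₀ ht₁ hab
  have hb : 0 < t ^ b := Real.rpow_pos_of_pos ht₀ b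
  have : -(t ^ b) ≤ s * t ^ b := by nlinarith [neg_abs_le s]
  linarith

lemma abs_deriv_rpow_add_mul_rpow_le (ht : 0 < t) (hs : |s| ≤ 1) :
    |a * t ^ (a - 1) + s * (b * t ^ (b - 1))|
      ≤ (|a| * t ^ (a + 1 - b) + |b| * t) * t ^ (b - 2) := by
  have ha : t ^ (a - 1) = t ^ (a + 1 - b) * t ^ (b - 2) := by
    rw [← Real.rpow_add ht]; ring_nf
  have hb : t ^ (b - 1) = t * t ^ (b - 2) := by
    rw [show b - 1 = 1 + (b - 2) by ring, Real.rpow_add ht, Real.rpow_one]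
  have hta : 0 ≤ t ^ (a + 1 - b) := (Real.rpow_pos_of_pos ht _).le
  have htb : 0 ≤ t ^ (b - 2) := (Real.rpow_pos_of_pos ht _).le
  calc |a * t ^ (a - 1) + s * (b * t ^ (b - 1))|
      ≤ |a * t ^ (a - 1)| + |s| * |b * t ^ (b - 1)| := by
        rw [← abs_mul]; exact abs_add_le _ _
    _ ≤ |a * t ^ (a - 1)| + |b * t ^ (b - 1)| := by
        gcongr; exact mul_le_of_le_one_left (abs_nonneg _) hs
    _ = (|a| * t ^ (a + 1 - b) + |b| * t) * t ^ (b - 2) := by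
        rw [ha, hb, abs_mul, abs_mul, abs_mul, abs_mul, abs_of_nonneg hta,
          abs_of_nonneg htb, abs_of_pos ht]
        ring

lemma neg_deriv2_rpow_add_mul_rpow_sub {μ : ℝ} (ht : 0 < t) (hroot : a * (a - 1) + μ = 0) :
    -(a * ((a - 1) * t ^ (a - 2)) + s * (b * ((b - 1) * t ^ (b - 2))))
        - μ / t ^ 2 * (t ^ a + s * t ^ b) = -(s * (b * (b - 1) + μ)) * t ^ (b - 2) := by
  have hsq : ∀ c : ℝ, t ^ c = t ^ (c - 2) * t ^ 2 := fun c => by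
    rw [← Real.rpow_natCast, ← Real.rpow_add ht]; norm_num
  rw [hsq a, hsq b, show μ = -(a * (a - 1)) by linarith]
  field_simp
  ring

lemma rpow_add_mul_rpow_superharmonic {μ L M : ℝ} (ht : 0 < t) (hs : |s| ≤ 1)
    (hroot : a * (a - 1) + μ = 0) (hL : |L| ≤ M)
    (hsmall : (|a| * t ^ (a + 1 - b) + |b| * t) * M ≤ -(s * (b * (b - 1) + μ))) :
    0 ≤ -((a * ((a - 1) * t ^ (a - 2)) + s * (b * ((b - 1) * t ^ (b - 2))))
        + (a * t ^ (a - 1) + s * (b * t ^ (b - 1))) * L) - μ / t ^ 2 * (t ^ a + s * t ^ b) := by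
  have hid := neg_deriv2_rpow_add_mul_rpow_sub (s := s) (b := b) ht hroot
  have htb : 0 ≤ t ^ (b - 2) := (Real.rpow_pos_of_pos ht _).le
  have hgrad : |(a * t ^ (a - 1) + s * (b * t ^ (b - 1))) * L|
      ≤ -(s * (b * (b - 1) + μ)) * t ^ (b - 2) :=
    calc |(a * t ^ (a - 1) + s * (b * t ^ (b - 1))) * L|
        ≤ (|a| * t ^ (a + 1 - b) + |b| * t) * t ^ (b - 2) * M := by
          rw [abs_mul]
          exact mul_le_mul (abs_deriv_rpow_add_mul_rpow_le ht hs) hL (abs_nonneg _)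
            (by positivity)
      _ = (|a| * t ^ (a + 1 - b) + |b| * t) * M * t ^ (b - 2) := by ring
      _ ≤ -(s * (b * (b - 1) + μ)) * t ^ (b - 2) := by gcongr
  linarith [le_abs_self ((a * t ^ (a - 1) + s * (b * t ^ (b - 1))) * L)]

lemma eventually_rpow_add_mul_lt {e A B M c : ℝ} (he : 0 < e) (hc : 0 < c) :
    ∀ᶠ t in 𝓝 0, (A * t ^ e + B * t) * M < c := by
  have hcont : ContinuousAt (fun t : ℝ => (A * t ^ e + B * t) * M) 0 := by
    have := Real.continuousAt_rpow_const 0 e (Or.inr he.le)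
    fun_prop
  refine hcont.eventually_lt continuousAt_const ?_
  simpa [Real.zero_rpow he.ne'] using hc

end Profile

section Laplacian

variable {N : ℕ}

lemma sum_sq_fderiv_single (f : EuclideanSpace ℝ (Fin N) → ℝ) (x : EuclideanSpace ℝ (Fin N)) :
    ∑ i : Fin N, fderiv ℝ f x (EuclideanSpace.single i 1) ^ 2 = ‖gradient f x‖ ^ 2 := by
  have hcoord : ∀ i, fderiv ℝ f x (EuclideanSpace.single i 1) = gradient f x i := fun i => by
    have h : inner ℝ (gradient f x) (EuclideanSpace.single i (1 : ℝ))
        = fderiv ℝ f x (EuclideanSpace.single i 1) := InnerProductSpace.toDual_symm_apply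
    rw [← h, EuclideanSpace.inner_single_right]
    simp
  simp only [hcoord, EuclideanSpace.real_norm_sq_eq]

lemma lap_comp {f : EuclideanSpace ℝ (Fin N) → ℝ} {φ φ' : ℝ → ℝ} {φ'' : ℝ}
    {x : EuclideanSpace ℝ (Fin N)} (hf : ContDiffAt ℝ 2 f x)
    (hφ' : ∀ᶠ t in 𝓝 (f x), HasDerivAt φ (φ' t) t) (hφ'' : HasDerivAt φ' φ'' (f x)) :
    lap (fun y => φ (f y)) x = φ'' * ‖gradient f x‖ ^ 2 + φ' (f x) * lap f x := by
  have hfx : DifferentiableAt ℝ f x := hf.differentiableAt two_ne_zero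
  have hfderiv : ∀ᶠ y in 𝓝 x, fderiv ℝ (fun z => φ (f z)) y = φ' (f y) • fderiv ℝ f y := by
    filter_upwards [(hf.eventually (by simp)).mono fun y hy => hy.differentiableAt two_ne_zero,
      hfx.continuousAt.eventually hφ'] with y hfy hφy
    exact (hφy.comp_hasFDerivAt y hfy.hasFDerivAt).fderiv
  have hφ'f : HasFDerivAt (fun y => φ' (f y)) (φ'' • fderiv ℝ f x) x :=
    hφ''.comp_hasFDerivAt x hfx.hasFDerivAt
  have hterm : ∀ e : EuclideanSpace ℝ (Fin N),
      fderiv ℝ (fun y => fderiv ℝ (fun z => φ (f z)) y e) x e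
        = φ' (f x) * fderiv ℝ (fun y => fderiv ℝ f y e) x e
          + φ'' * fderiv ℝ f x e ^ 2 := by
    intro e
    have hfe : DifferentiableAt ℝ (fun y => fderiv ℝ f y e) x :=
      ((hf.fderiv_right (m := 1) (by norm_num)).clm_apply contDiffAt_const).differentiableAt
        one_ne_zero
    have hcongr : (fun y => fderiv ℝ (fun z => φ (f z)) y e)
        =ᶠ[𝓝 x] fun y => φ' (f y) * fderiv ℝ f y e := by
      filter_upwards [hfderiv] with y hy
      rw [hy]; rfl
    rw [hcongr.fderiv_eq, fderiv_fun_mul hφ'f.differentiableAt hfe, hφ'f.fderiv]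
    simp only [add_apply, FunLike.coe_smul, Pi.smul_apply, smul_eq_mul]
    ring
  simp only [lap, hterm, Finset.sum_add_distrib, ← Finset.mul_sum, sum_sq_fderiv_single]
  ring

end Laplacian

section Collar

variable {N : ℕ} {Ω : Set (EuclideanSpace ℝ (Fin N))}

lemma isOpen_collar (hΩ : IsOpen Ω) (ρ : ℝ) : IsOpen (collar Ω ρ) :=
  hΩ.inter (isOpen_Iio.preimage (continuous_infDist_pt _))

lemma collar_mono {σ τ : ℝ} (h : σ ≤ τ) : collar Ω σ ⊆ collar Ω τ :=
  fun _ hx => ⟨hx.1, hx.2.trans_le h⟩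

lemma compl_nonempty_of_isBounded (hN : 0 < N) (hΩ : Bornology.IsBounded Ω) : Ωᶜ.Nonempty := by
  have : Nonempty (Fin N) := ⟨⟨0, hN⟩⟩
  refine Set.nonempty_compl.2 fun h => ?_
  exact NormedSpace.unbounded_univ ℝ (EuclideanSpace ℝ (Fin N)) (h ▸ hΩ)

lemma bdist_pos (hΩ : IsOpen Ω) (hne : Ωᶜ.Nonempty) {x : EuclideanSpace ℝ (Fin N)}
    (hx : x ∈ Ω) : 0 < bdist Ω x :=
  (hΩ.isClosed_compl.notMem_iff_infDist_pos hne).1 (by simpa using hx)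

end Collar

section SuperHarmonic

variable {N : ℕ} {Ω : Set (EuclideanSpace ℝ (Fin N))}

lemma lap_rpow_add_mul_rpow_comp {f : EuclideanSpace ℝ (Fin N) → ℝ} {x : EuclideanSpace ℝ (Fin N)}
    {a b s : ℝ} (hf : ContDiffAt ℝ 2 f x) (hgrad : ‖gradient f x‖ = 1) (hfx : 0 < f x) :
    lap (fun y => f y ^ a + s * f y ^ b) x
      = (a * ((a - 1) * f x ^ (a - 2)) + s * (b * ((b - 1) * f x ^ (b - 2))))
        + (a * f x ^ (a - 1) + s * (b * f x ^ (b - 1))) * lap f x := by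
  have hφ' : ∀ᶠ t in 𝓝 (f x), HasDerivAt (fun r : ℝ => r ^ a + s * r ^ b)
      (a * t ^ (a - 1) + s * (b * t ^ (b - 1))) t :=
    (lt_mem_nhds hfx).mono fun t ht => hasDerivAt_rpow_add_mul_rpow ht
  rw [lap_comp hf hφ' (hasDerivAt_deriv_rpow_add_mul_rpow hfx), hgrad]
  ring

lemma exists_posSuperHarmOn_rpow_add_mul_rpow (hΩ : IsOpen Ω) (hne : Ωᶜ.Nonempty) {ρ₀ : ℝ}
    (hρ₀ : GoodCollar Ω ρ₀) {μ a b s : ℝ} (hs : |s| ≤ 1) (hroot : a * (a - 1) + μ = 0)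
    (hab : a < b) (hba : b < a + 1) (hsign : s * (b * (b - 1) + μ) < 0) :
    ∃ σ, 0 < σ ∧ PosSuperHarmOn Ω μ σ (fun x => bdist Ω x ^ a + s * bdist Ω x ^ b) := by
  obtain ⟨hρ₀, hC2, hgrad, M, hM⟩ := hρ₀
  obtain ⟨ε, hε, hsmall⟩ := Metric.eventually_nhds_iff.1
    (eventually_rpow_add_mul_lt (A := |a|) (B := |b|) (M := M) (sub_pos.2 hba)
      (neg_pos.2 hsign))
  have hσ : 0 < min (min ρ₀ 1) ε := by positivity
  have hx : ∀ x ∈ collar Ω (min (min ρ₀ 1) ε), x ∈ collar Ω ρ₀ ∧ 0 < bdist Ω x ∧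
      bdist Ω x < 1 ∧ dist (bdist Ω x) 0 < ε ∧ ContDiffAt ℝ 2 (bdist Ω) x := by
    intro x hx
    have hxρ₀ : x ∈ collar Ω ρ₀ := collar_mono ((min_le_left _ _).trans (min_le_left _ _)) hx
    have ht := bdist_pos hΩ hne hx.1
    refine ⟨hxρ₀, ht, ?_, ?_, hC2.contDiffAt ((isOpen_collar hΩ ρ₀).mem_nhds hxρ₀)⟩
    · exact hx.2.trans_le ((min_le_left _ _).trans (min_le_right _ _))
    · rw [Real.dist_0_eq_abs, abs_of_pos ht]
      exact hx.2.trans_le (min_le_right _ _)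
  refine ⟨_, hσ, ⟨fun x hx' => ?_, fun x hx' => ?_⟩, fun x hx' => ?_⟩
  · obtain ⟨-, ht, -, -, hδ⟩ := hx x hx'
    exact (((Real.contDiffAt_rpow_const_of_ne ht.ne').add (contDiffAt_const.mul
      (Real.contDiffAt_rpow_const_of_ne ht.ne'))).comp x hδ).contDiffWithinAt
  · obtain ⟨hxρ₀, ht, -, htε, hδ⟩ := hx x hx'
    rw [lap_rpow_add_mul_rpow_comp hδ (hgrad x hxρ₀) ht]
    exact rpow_add_mul_rpow_superharmonic ht hs hroot (hM x hxρ₀) (hsmall htε).le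
  · obtain ⟨-, ht, ht₁, -, -⟩ := hx x hx'
    exact rpow_add_mul_rpow_pos ht ht₁ hab hs

end SuperHarmonic

section Comparison

variable {N : ℕ} {Ω : Set (EuclideanSpace ℝ (Fin N))} {μ ρ σ : ℝ}
  {u h g : EuclideanSpace ℝ (Fin N) → ℝ}

lemma SmallSubHarm.exists_div_le (hu : SmallSubHarm Ω μ u ρ) (hσ : 0 < σ)
    (hh : PosSuperHarmOn Ω μ σ h) (hhg : ∀ x ∈ collar Ω σ, h x ≤ g x) :
    ∃ C : ℝ, ∃ τ, 0 < τ ∧ τ ≤ ρ ∧ ∀ x ∈ collar Ω τ, u x / g x ≤ C := by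
  obtain ⟨C, τ, hτ, hτσ, hC⟩ := hu σ hσ h hh
  refine ⟨max C 0, τ, hτ, hτσ.trans (min_le_left _ _), fun x hx => ?_⟩
  have hxσ : x ∈ collar Ω σ := collar_mono (hτσ.trans (min_le_right _ _)) hx
  have hhx := hh.2 x hxσ
  rw [div_le_iff₀ (hhx.trans_le (hhg x hxσ))]
  calc u x ≤ C * h x := (div_le_iff₀ hhx).1 (hC x hx)
    _ ≤ max C 0 * h x := by gcongr; exact le_max_left _ _
    _ ≤ max C 0 * g x := mul_le_mul_of_nonneg_left (hhg x hxσ) (le_max_right _ _)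

lemma LargeSubHarm.exists_le_div (hu : LargeSubHarm Ω μ u ρ) (hσ : 0 < σ)
    (hh : PosSuperHarmOn Ω μ σ h) (hg : ∀ x ∈ collar Ω σ, 0 < g x ∧ g x ≤ h x) :
    ∃ c, 0 < c ∧ ∀ τ, 0 < τ → τ ≤ ρ → ∃ x ∈ collar Ω τ, c ≤ u x / g x := by
  obtain ⟨c, hc, hcu⟩ := hu σ hσ h hh
  refine ⟨c, hc, fun τ hτ hτρ => ?_⟩
  obtain ⟨x, hx, hcx⟩ := hcu (min τ σ) (lt_min hτ hσ) (min_le_min hτρ le_rfl)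
  have hxσ : x ∈ collar Ω σ := collar_mono (min_le_right _ _) hx
  refine ⟨x, collar_mono (min_le_left _ _) hx, ?_⟩
  rw [le_div_iff₀ (hg x hxσ).1]
  calc c * g x ≤ c * h x := by gcongr; exact (hg x hxσ).2
    _ ≤ u x := (le_div_iff₀ (hh.2 x hxσ)).1 hcx

end Comparison

theorem stmt7_general {N : ℕ} (hN : 2 ≤ N) (Ω : Set (EuclideanSpace ℝ (Fin N)))
    (hΩo : IsOpen Ω) (hΩb : Bornology.IsBounded Ω)
    (ρ₀ : ℝ) (hρ₀ : GoodCollar Ω ρ₀) (μ : ℝ) (hμ : μ < 1 / 4) :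
    (∀ u : EuclideanSpace ℝ (Fin N) → ℝ, ∀ ρ, 0 < ρ → SubHarm Ω μ (collar Ω ρ) u →
      SmallSubHarm Ω μ u ρ →
      ∃ C : ℝ, ∃ τ, 0 < τ ∧ τ ≤ ρ ∧
        ∀ x ∈ collar Ω τ, u x / bdist Ω x ^ (1 / 2 + Real.sqrt (1 / 4 - μ)) ≤ C) ∧
    (∀ U : EuclideanSpace ℝ (Fin N) → ℝ, ∀ ρ, 0 < ρ → SubHarm Ω μ (collar Ω ρ) U →
      LargeSubHarm Ω μ U ρ →
      ∃ c, 0 < c ∧ ∀ τ, 0 < τ → τ ≤ ρ →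
        ∃ x ∈ collar Ω τ, c ≤ U x / bdist Ω x ^ (1 / 2 - Real.sqrt (1 / 4 - μ))) := by
  have hne := compl_nonempty_of_isBounded (by omega) hΩb
  set d := Real.sqrt (1 / 4 - μ)
  have hd : 0 < d := Real.sqrt_pos.2 (by linarith)
  have hd2 : d ^ 2 = 1 / 4 - μ := Real.sq_sqrt (by linarith)
  have hpos : ∀ x ∈ Ω, ∀ e : ℝ, 0 < bdist Ω x ^ e := fun x hx e =>
    Real.rpow_pos_of_pos (bdist_pos hΩo hne hx) e
  constructor
  · intro u ρ _ _ hu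
    obtain ⟨σ, hσ, hh⟩ := exists_posSuperHarmOn_rpow_add_mul_rpow hΩo hne hρ₀
      (μ := μ) (a := 1 / 2 + d) (b := 1 / 2 + d + 1 / 2) (s := -1) (by norm_num)
      (by linear_combination hd2) (by linarith) (by linarith) (by nlinarith)
    exact hu.exists_div_le hσ hh fun x hx => by linarith [hpos x hx.1 (1 / 2 + d + 1 / 2)]
  · intro U ρ _ _ hU
    obtain ⟨σ, hσ, hh⟩ := exists_posSuperHarmOn_rpow_add_mul_rpow hΩo hne hρ₀
      (μ := μ) (a := 1 / 2 - d) (b := 1 / 2 - d + min d (1 / 2)) (s := 1) (by norm_num)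
      (by linear_combination hd2) (by simp [hd]) (by linarith [min_le_right d (1 / 2)])
      (by nlinarith [min_le_left d (1 / 2), lt_min hd (one_half_pos (α := ℝ))])
    exact hU.exists_le_div hσ hh fun x hx =>
      ⟨hpos x hx.1 _, by linarith [hpos x hx.1 (1 / 2 - d + min d (1 / 2))]⟩

/-- Let `μ < 1/4`. (a) A small local sub-harmonic `u` of `L_μ` satisfies
`limsup_{δ(x)→0} u(x)/δ(x)^{β₊} < ∞`. (b) A large local sub-harmonic `U` of `L_μ`
satisfies `limsup_{δ(x)→0} U(x)/δ(x)^{β₋} > 0`. -/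
theorem stmt7 {N : ℕ} (hN : 2 ≤ N) (Ω : Set (EuclideanSpace ℝ (Fin N)))
    (hΩo : IsOpen Ω) (hΩne : Ω.Nonempty) (hΩb : Bornology.IsBounded Ω)
    (ρ₀ : ℝ) (hρ₀ : GoodCollar Ω ρ₀) (μ : ℝ) (hμ : μ < 1 / 4) :
    (∀ u : EuclideanSpace ℝ (Fin N) → ℝ, ∀ ρ, 0 < ρ → SubHarm Ω μ (collar Ω ρ) u →
      SmallSubHarm Ω μ u ρ →
      ∃ C : ℝ, ∃ τ, 0 < τ ∧ τ ≤ ρ ∧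
        ∀ x ∈ collar Ω τ, u x / bdist Ω x ^ (1 / 2 + Real.sqrt (1 / 4 - μ)) ≤ C) ∧
    (∀ U : EuclideanSpace ℝ (Fin N) → ℝ, ∀ ρ, 0 < ρ → SubHarm Ω μ (collar Ω ρ) U →
      LargeSubHarm Ω μ U ρ →
      ∃ c, 0 < c ∧ ∀ τ, 0 < τ → τ ≤ ρ →
        ∃ x ∈ collar Ω τ, c ≤ U x / bdist Ω x ^ (1 / 2 - Real.sqrt (1 / 4 - μ))) :=
  stmt7_general hN Ω hΩo hΩb ρ₀ hρ₀ μ hμ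
end
end

section
/- Let μ, s ∈ ℝ and p > 1, and let (d, c) be a regularized distance on Ω. Then there exists γ₀ > 0, independent of ε, such that for every γ ≥ γ₀ and every ε ≥ 0 the function ū(x) := γ·d(x)^{s/(p−1)}·(d(x) − ε)^{−2/(p−1)} is a super-solution of (*) on the open set {x ∈ Ω : d(x) > ε}. -/
/-!
Write `ū = γ φ(d)` with `φ(t) = t^a (t - ε)^b`, `a = s/(p-1)`, `b = -2/(p-1)`, so that
`Δū = γ (φ''(d) |∇d|² + φ'(d) Δd)`. Since `0 < d - ε ≤ d` and `δ ≍ d`, each of `|φ''(d)| |∇d|²`,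
`|φ'(d)| |Δd|` and `φ(d)/δ²` is at most a constant, independent of `ε`, times
`P = d^a (d - ε)^(b-2)`. The exponents are chosen so that `φ(d)^p = d^s P` exactly, whence
`ū^p/δ^s ≥ c^(-|s|) γ^p P`; and `γ^p` beats the `O(γ P)` linear terms once `γ^(p-1)` is large.
-/

open Set Metric MeasureTheory Real

noncomputable section

lemma fderiv_fderiv_comp_apply {E : Type*} [NormedAddCommGroup E] [NormedSpace ℝ E]
    {G : Set E} (hG : IsOpen G) {f : E → ℝ} {F F' F'' : ℝ → ℝ} (hf : ContDiffOn ℝ 2 f G)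
    (hF : ∀ y ∈ G, HasDerivAt F (F' (f y)) (f y)) {x : E} (hx : x ∈ G)
    (hF' : HasDerivAt F' (F'' (f x)) (f x)) (e : E) :
    fderiv ℝ (fun y => fderiv ℝ (fun z => F (f z)) y e) x e
      = F'' (f x) * fderiv ℝ f x e ^ 2 + F' (f x) * fderiv ℝ (fun y => fderiv ℝ f y e) x e := by
  have hfd : ∀ y ∈ G, HasFDerivAt f (fderiv ℝ f y) y := fun y hy =>
    ((hf.differentiableOn (by norm_num)).differentiableAt (hG.mem_nhds hy)).hasFDerivAt
  have hDf : DifferentiableAt ℝ (fun y => fderiv ℝ f y e) x :=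
    (((hf.fderiv_of_isOpen hG (m := 1) (by norm_num)).differentiableOn one_ne_zero).differentiableAt
      (hG.mem_nhds hx)).clm_apply (differentiableAt_const e)
  have hchain : (fun y => F' (f y) * fderiv ℝ f y e) =ᶠ[nhds x]
      fun y => fderiv ℝ (fun z => F (f z)) y e := by
    filter_upwards [hG.mem_nhds hx] with y hy
    rw [show (fun z => F (f z)) = F ∘ f from rfl,
      ((hF y hy).comp_hasFDerivAt y (hfd y hy)).fderiv]
    rfl
  have hprod := (((hF'.comp_hasFDerivAt x (hfd x hx))).mul hDf.hasFDerivAt).congr_of_eventuallyEq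
    hchain.symm
  rw [hprod.fderiv]
  simp only [add_apply, smul_apply, smul_eq_mul, Function.comp_apply]
  ring

lemma sum_fderiv_single_sq {N : ℕ} (f : EuclideanSpace ℝ (Fin N) → ℝ)
    (x : EuclideanSpace ℝ (Fin N)) :
    ∑ i, fderiv ℝ f x (EuclideanSpace.single i 1) ^ 2 = ‖gradient f x‖ ^ 2 := by
  simp only [← toDual_gradient, InnerProductSpace.toDual_apply_apply,
    EuclideanSpace.inner_single_right, one_mul, conj_trivial, EuclideanSpace.real_norm_sq_eq]

lemma lap_comp_s11 {N : ℕ} {G : Set (EuclideanSpace ℝ (Fin N))} (hG : IsOpen G)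
    {f : EuclideanSpace ℝ (Fin N) → ℝ} {F F' F'' : ℝ → ℝ} (hf : ContDiffOn ℝ 2 f G)
    (hF : ∀ y ∈ G, HasDerivAt F (F' (f y)) (f y)) {x : EuclideanSpace ℝ (Fin N)} (hx : x ∈ G)
    (hF' : HasDerivAt F' (F'' (f x)) (f x)) :
    lap (fun y => F (f y)) x = F'' (f x) * ‖gradient f x‖ ^ 2 + F' (f x) * lap f x := by
  simp only [lap, fderiv_fderiv_comp_apply hG hf hF hx hF', Finset.sum_add_distrib,
    ← Finset.mul_sum, sum_fderiv_single_sq]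

lemma rpow_mul_rpow_le_rpow_mul_rpow {t u a b a' b' : ℝ} (hu : 0 < u) (hut : u ≤ t)
    (ha : a' ≤ a) (hab : a' + b' = a + b) : t ^ a' * u ^ b' ≤ t ^ a * u ^ b := by
  have ht : 0 < t := hu.trans_le hut
  have hb' : b' = b + (a - a') := by linarith
  have ha' : a = a' + (a - a') := by ring
  rw [hb', rpow_add hu, ha', rpow_add ht, add_sub_cancel_left]
  have : u ^ (a - a') ≤ t ^ (a - a') := rpow_le_rpow hu.le hut (sub_nonneg.2 ha)
  calc t ^ a' * (u ^ b * u ^ (a - a')) = t ^ a' * u ^ b * u ^ (a - a') := by ring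
    _ ≤ t ^ a' * u ^ b * t ^ (a - a') := by gcongr
    _ = t ^ a' * t ^ (a - a') * u ^ b := by ring

lemma rpow_le_rpow_abs_mul_rpow {c t δ s : ℝ} (hc : 0 < c) (hδ : 0 < δ) (h₁ : c⁻¹ * δ ≤ t)
    (h₂ : t ≤ c * δ) : δ ^ s ≤ c ^ |s| * t ^ s := by
  have ht : 0 < t := lt_of_lt_of_le (by positivity) h₁
  rcases le_or_gt 0 s with hs | hs
  · have hδt : δ ≤ c * t := by rwa [inv_mul_le_iff₀ hc] at h₁
    calc δ ^ s ≤ (c * t) ^ s := rpow_le_rpow hδ.le hδt hs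
      _ = c ^ |s| * t ^ s := by rw [mul_rpow hc.le ht.le, abs_of_nonneg hs]
  · have htδ : c⁻¹ * t ≤ δ := by rwa [inv_mul_le_iff₀ hc]
    calc δ ^ s ≤ (c⁻¹ * t) ^ s := rpow_le_rpow_of_nonpos (by positivity) htδ hs.le
      _ = c ^ |s| * t ^ s := by
        rw [mul_rpow (by positivity) ht.le, inv_rpow hc.le, abs_of_neg hs, rpow_neg hc.le]

lemma abs_mul_mul_of_pos (k : ℝ) {x y : ℝ} (hx : 0 < x) (hy : 0 < y) :
    |k * x * y| = |k| * (x * y) := by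
  rw [abs_mul, abs_mul, abs_of_pos hx, abs_of_pos hy, mul_assoc]

def profile (a b ε t : ℝ) : ℝ := t ^ a * (t - ε) ^ b

def profileDeriv (a b ε t : ℝ) : ℝ :=
  a * t ^ (a - 1) * (t - ε) ^ b + b * t ^ a * (t - ε) ^ (b - 1)

def profileDeriv2 (a b ε t : ℝ) : ℝ :=
  a * (a - 1) * t ^ (a - 2) * (t - ε) ^ b + 2 * a * b * t ^ (a - 1) * (t - ε) ^ (b - 1)
    + b * (b - 1) * t ^ a * (t - ε) ^ (b - 2)

def profileConst (μ a b c : ℝ) : ℝ :=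
  c ^ 2 * (|a * (a - 1)| + |2 * a * b| + |b * (b - 1)|) + c * (|a| + |b|) + |μ| * c ^ 2

section Profile

variable {a b ε t : ℝ}

lemma profile_pos (hε : 0 ≤ ε) (ht : ε < t) : 0 < profile a b ε t := by
  have : 0 < t - ε := sub_pos.2 ht
  have : 0 < t := hε.trans_lt ht
  rw [profile]
  positivity

lemma contDiffAt_profile {n : WithTop ℕ∞} (ht : t ≠ 0) (htε : t - ε ≠ 0) :
    ContDiffAt ℝ n (profile a b ε) t :=
  (contDiffAt_rpow_const_of_ne ht).mul
    ((contDiffAt_rpow_const_of_ne htε).comp t (contDiffAt_id.sub contDiffAt_const))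

lemma hasDerivAt_profile (a b : ℝ) (ht : t ≠ 0) (htε : t - ε ≠ 0) :
    HasDerivAt (profile a b ε) (profileDeriv a b ε t) t := by
  have h₁ := hasDerivAt_rpow_const (p := a) (Or.inl ht)
  have h₂ := ((hasDerivAt_id t).sub_const ε).rpow_const (p := b) (Or.inl htε)
  refine (h₁.mul h₂).congr_deriv ?_
  simp only [profileDeriv, id]
  ring

lemma profileDeriv_eq (a b ε : ℝ) :
    profileDeriv a b ε = fun t => a * profile (a - 1) b ε t + b * profile a (b - 1) ε t := by
  funext t
  simp only [profileDeriv, profile]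
  ring

lemma hasDerivAt_profileDeriv (ht : t ≠ 0) (htε : t - ε ≠ 0) :
    HasDerivAt (profileDeriv a b ε) (profileDeriv2 a b ε t) t := by
  rw [profileDeriv_eq]
  refine (((hasDerivAt_profile (a - 1) b ht htε).const_mul a).add
    ((hasDerivAt_profile a (b - 1) ht htε).const_mul b)).congr_deriv ?_
  simp only [profileDeriv2, profileDeriv]
  -- `ring_nf` also normalizes the exponents, identifying `a - 1 - 1` with `a - 2`
  ring_nf

lemma abs_profileDeriv2_le (hε : 0 ≤ ε) (ht : ε < t) :
    |profileDeriv2 a b ε t|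
      ≤ (|a * (a - 1)| + |2 * a * b| + |b * (b - 1)|) * profile a (b - 2) ε t := by
  have hu : 0 < t - ε := sub_pos.2 ht
  have hut : t - ε ≤ t := by linarith
  have ht₀ : 0 < t := hε.trans_lt ht
  have h₁ : t ^ (a - 2) * (t - ε) ^ b ≤ profile a (b - 2) ε t :=
    rpow_mul_rpow_le_rpow_mul_rpow hu hut (by linarith) (by ring)
  have h₂ : t ^ (a - 1) * (t - ε) ^ (b - 1) ≤ profile a (b - 2) ε t :=
    rpow_mul_rpow_le_rpow_mul_rpow hu hut (by linarith) (by ring)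
  calc |profileDeriv2 a b ε t|
      ≤ |a * (a - 1)| * (t ^ (a - 2) * (t - ε) ^ b)
        + |2 * a * b| * (t ^ (a - 1) * (t - ε) ^ (b - 1))
        + |b * (b - 1)| * profile a (b - 2) ε t := by
        rw [profileDeriv2, profile, ← abs_mul_mul_of_pos _ (by positivity) (by positivity),
          ← abs_mul_mul_of_pos _ (by positivity) (by positivity),
          ← abs_mul_mul_of_pos _ (by positivity) (by positivity)]
        exact (abs_add_le _ _).trans (add_le_add_left (abs_add_le _ _) _)
    _ ≤ |a * (a - 1)| * profile a (b - 2) ε t + |2 * a * b| * profile a (b - 2) ε t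
        + |b * (b - 1)| * profile a (b - 2) ε t := by gcongr
    _ = _ := by ring

lemma abs_profileDeriv_le (hε : 0 ≤ ε) (ht : ε < t) :
    |profileDeriv a b ε t| ≤ (|a| + |b|) * t * profile a (b - 2) ε t := by
  have hu : 0 < t - ε := sub_pos.2 ht
  have hut : t - ε ≤ t := by linarith
  have ht₀ : 0 < t := hε.trans_lt ht
  have htP : t * profile a (b - 2) ε t = t ^ (a + 1) * (t - ε) ^ (b - 2) := by
    rw [profile, rpow_add_one ht₀.ne']
    ring
  have h₁ : t ^ (a - 1) * (t - ε) ^ b ≤ t * profile a (b - 2) ε t :=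
    htP ▸ rpow_mul_rpow_le_rpow_mul_rpow hu hut (by linarith) (by ring)
  have h₂ : t ^ a * (t - ε) ^ (b - 1) ≤ t * profile a (b - 2) ε t :=
    htP ▸ rpow_mul_rpow_le_rpow_mul_rpow hu hut (by linarith) (by ring)
  calc |profileDeriv a b ε t|
      ≤ |a| * (t ^ (a - 1) * (t - ε) ^ b) + |b| * (t ^ a * (t - ε) ^ (b - 1)) := by
        rw [profileDeriv, ← abs_mul_mul_of_pos _ (by positivity) (by positivity),
          ← abs_mul_mul_of_pos _ (by positivity) (by positivity)]
        exact abs_add_le _ _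
    _ ≤ |a| * (t * profile a (b - 2) ε t) + |b| * (t * profile a (b - 2) ε t) := by gcongr
    _ = _ := by ring

lemma profile_div_sq_le {c δ : ℝ} (hε : 0 ≤ ε) (ht : ε < t) (hδ : 0 < δ) (htδ : t ≤ c * δ) :
    profile a b ε t / δ ^ 2 ≤ c ^ 2 * profile a (b - 2) ε t := by
  have hu : 0 < t - ε := sub_pos.2 ht
  have ht₀ : 0 < t := hε.trans_lt ht
  have hsq : t ^ 2 ≤ c ^ 2 * δ ^ 2 := by
    rw [← mul_pow]
    exact pow_le_pow_left₀ ht₀.le htδ 2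
  have hP : profile a b ε t / t ^ 2 ≤ profile a (b - 2) ε t := by
    rw [profile, mul_div_right_comm, ← rpow_natCast, ← rpow_sub ht₀, Nat.cast_ofNat]
    exact rpow_mul_rpow_le_rpow_mul_rpow hu (by linarith) (by linarith) (by ring)
  have hφ := (profile_pos (a := a) (b := b) hε ht).le
  calc profile a b ε t / δ ^ 2 ≤ c ^ 2 * profile a b ε t / t ^ 2 := by
        rw [div_le_div_iff₀ (by positivity) (by positivity)]
        nlinarith
    _ = c ^ 2 * (profile a b ε t / t ^ 2) := mul_div_assoc _ _ _
    _ ≤ c ^ 2 * profile a (b - 2) ε t := by gcongr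

lemma profile_rpow {p s : ℝ} (ha : a * (p - 1) = s) (hb : b * (p - 1) = -2) (hε : 0 ≤ ε)
    (ht : ε < t) : profile a b ε t ^ p = t ^ s * profile a (b - 2) ε t := by
  have hu : 0 < t - ε := sub_pos.2 ht
  have ht₀ : 0 < t := hε.trans_lt ht
  rw [profile, profile, mul_rpow (by positivity) (by positivity), ← rpow_mul ht₀.le,
    ← rpow_mul hu.le, ← mul_assoc, ← rpow_add ht₀]
  congr 2
  · linear_combination ha
  · linear_combination hb

lemma profile_linear_terms_le {μ c γ δ g L : ℝ} (hε : 0 ≤ ε) (ht : ε < t) (hδ : 0 < δ)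
    (htδ : t ≤ c * δ) (hg₀ : 0 ≤ g) (hg : g ≤ c) (hL : |L| ≤ c / t) (hγ : 0 ≤ γ) :
    γ * profileDeriv2 a b ε t * g ^ 2 + γ * profileDeriv a b ε t * L
        + μ / δ ^ 2 * (γ * profile a b ε t)
      ≤ γ * profileConst μ a b c * profile a (b - 2) ε t := by
  have ht₀ : 0 < t := hε.trans_lt ht
  set P := profile a (b - 2) ε t
  have hP : 0 < P := profile_pos hε ht
  have hsecond : profileDeriv2 a b ε t * g ^ 2
      ≤ (|a * (a - 1)| + |2 * a * b| + |b * (b - 1)|) * P * c ^ 2 :=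
    (le_abs_self _).trans <| by
      rw [abs_mul, abs_of_nonneg (by positivity : 0 ≤ g ^ 2)]
      exact mul_le_mul (abs_profileDeriv2_le hε ht) (pow_le_pow_left₀ hg₀ hg 2)
        (by positivity) (by positivity)
  have hfirst : profileDeriv a b ε t * L ≤ (|a| + |b|) * c * P :=
    calc profileDeriv a b ε t * L ≤ |profileDeriv a b ε t| * |L| :=
          (le_abs_self _).trans (abs_mul _ _).le
      _ ≤ (|a| + |b|) * t * P * (c / t) :=
          mul_le_mul (abs_profileDeriv_le hε ht) hL (abs_nonneg _) (by positivity)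
      _ = (|a| + |b|) * c * P := by field_simp
  have hzeroth : μ / δ ^ 2 * profile a b ε t ≤ |μ| * c ^ 2 * P :=
    calc μ / δ ^ 2 * profile a b ε t = μ * (profile a b ε t / δ ^ 2) := by ring
      _ ≤ |μ| * (c ^ 2 * P) :=
          mul_le_mul (le_abs_self μ) (profile_div_sq_le hε ht hδ htδ)
            (div_nonneg (profile_pos hε ht).le (by positivity)) (abs_nonneg μ)
      _ = |μ| * c ^ 2 * P := by ring
  have := mul_le_mul_of_nonneg_left (add_le_add (add_le_add hsecond hfirst) hzeroth) hγ
  rw [profileConst]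
  linarith

lemma profile_nonlinear_term_ge {p s c γ δ : ℝ} (ha : a * (p - 1) = s) (hb : b * (p - 1) = -2)
    (hε : 0 ≤ ε) (ht : ε < t) (hc : 0 < c) (hδ : 0 < δ) (hδt : c⁻¹ * δ ≤ t) (htδ : t ≤ c * δ)
    (hγ : 0 ≤ γ) :
    γ ^ p / c ^ |s| * profile a (b - 2) ε t ≤ (γ * profile a b ε t) ^ p / δ ^ s :=
  calc γ ^ p / c ^ |s| * profile a (b - 2) ε t
        = γ ^ p * (t ^ s * profile a (b - 2) ε t) / (c ^ |s| * t ^ s) := by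
        have : 0 < t ^ s := rpow_pos_of_pos (hε.trans_lt ht) s
        field_simp
    _ ≤ γ ^ p * (t ^ s * profile a (b - 2) ε t) / δ ^ s := by
        have := profile_pos (a := a) (b := b - 2) hε ht
        have : 0 < t ^ s := rpow_pos_of_pos (hε.trans_lt ht) s
        exact div_le_div_of_nonneg_left (by positivity) (rpow_pos_of_pos hδ s)
          (rpow_le_rpow_abs_mul_rpow hc hδ hδt htδ)
    _ = (γ * profile a b ε t) ^ p / δ ^ s := by
        rw [mul_rpow hγ (profile_pos hε ht).le, profile_rpow ha hb hε ht]

lemma superSol_ineq_profile {p s μ c γ δ g L : ℝ} (ha : a * (p - 1) = s)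
    (hb : b * (p - 1) = -2) (hε : 0 ≤ ε) (ht : ε < t) (hc : 0 < c) (hδt : c⁻¹ * δ ≤ t)
    (htδ : t ≤ c * δ) (hg₀ : 0 ≤ g) (hg : g ≤ c) (hL : |L| ≤ c / t) (hγ : 0 < γ)
    (hγK : profileConst μ a b c * c ^ |s| ≤ γ ^ (p - 1)) :
    0 ≤ -(γ * profileDeriv2 a b ε t * g ^ 2 + γ * profileDeriv a b ε t * L)
      - μ / δ ^ 2 * (γ * profile a b ε t) + (γ * profile a b ε t) ^ p / δ ^ s := by
  have hδ : 0 < δ := by nlinarith [hε.trans_lt ht]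
  have hK : γ * profileConst μ a b c ≤ γ ^ p / c ^ |s| := by
    rw [le_div_iff₀ (by positivity), ← add_sub_cancel 1 p, rpow_add hγ, rpow_one, mul_assoc]
    exact mul_le_mul_of_nonneg_left hγK hγ.le
  have := mul_le_mul_of_nonneg_right hK (profile_pos (a := a) (b := b - 2) hε ht).le
  linarith [profile_linear_terms_le (a := a) (b := b) (μ := μ) hε ht hδ htδ hg₀ hg hL hγ.le,
    profile_nonlinear_term_ge ha hb hε ht hc hδ hδt htδ hγ.le]

lemma contDiffOn_profile_comp {E : Type*} [NormedAddCommGroup E] [NormedSpace ℝ E] {G : Set E}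
    (hG : IsOpen G) {d : E → ℝ} (hd : ContDiffOn ℝ 2 d G) (hε : 0 ≤ ε) (hdε : ∀ x ∈ G, ε < d x)
    (γ : ℝ) : ContDiffOn ℝ 2 (fun x => γ * profile a b ε (d x)) G := fun x hx =>
  (contDiffAt_const.mul ((contDiffAt_profile (hε.trans_lt (hdε x hx)).ne'
    (sub_pos.2 (hdε x hx)).ne').comp x (hd.contDiffAt (hG.mem_nhds hx)))).contDiffWithinAt

lemma lap_profile_comp {N : ℕ} {G : Set (EuclideanSpace ℝ (Fin N))} (hG : IsOpen G)
    {d : EuclideanSpace ℝ (Fin N) → ℝ} (hd : ContDiffOn ℝ 2 d G) (hε : 0 ≤ ε)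
    (hdε : ∀ x ∈ G, ε < d x) (γ : ℝ) {x : EuclideanSpace ℝ (Fin N)} (hx : x ∈ G) :
    lap (fun y => γ * profile a b ε (d y)) x
      = γ * profileDeriv2 a b ε (d x) * ‖gradient d x‖ ^ 2
        + γ * profileDeriv a b ε (d x) * lap d x := by
  have hne : ∀ y ∈ G, d y ≠ 0 ∧ d y - ε ≠ 0 := fun y hy =>
    ⟨(hε.trans_lt (hdε y hy)).ne', (sub_pos.2 (hdε y hy)).ne'⟩
  exact lap_comp_s11 hG hd (F := fun t => γ * profile a b ε t)
    (F' := fun t => γ * profileDeriv a b ε t) (F'' := fun t => γ * profileDeriv2 a b ε t)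
    (fun y hy => (hasDerivAt_profile a b (hne y hy).1 (hne y hy).2).const_mul γ) hx
    ((hasDerivAt_profileDeriv (hne x hx).1 (hne x hx).2).const_mul γ)

end Profile

theorem stmt11_general {N : ℕ} (Ω : Set (EuclideanSpace ℝ (Fin N)))
    (hΩo : IsOpen Ω)
    (μ s p : ℝ) (hp : 1 < p)
    (d : EuclideanSpace ℝ (Fin N) → ℝ) (c : ℝ) (hd : RegDist Ω d c) :
    ∃ γ₀, 0 < γ₀ ∧ ∀ γ, γ₀ ≤ γ → ∀ ε : ℝ, 0 ≤ ε →
      SuperSol Ω μ s p {x ∈ Ω | ε < d x}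
        (fun x => γ * d x ^ (s / (p - 1)) * (d x - ε) ^ (-(2 / (p - 1)))) := by
  obtain ⟨hc, hdC, -, hdcomp, hdgrad, hdlap⟩ := hd
  have hc₀ : 0 < c := zero_lt_one.trans_le hc
  have hp₁ : 0 < p - 1 := sub_pos.2 hp
  set a := s / (p - 1)
  set b := -(2 / (p - 1))
  have ha : a * (p - 1) = s := div_mul_cancel₀ s hp₁.ne'
  have hb : b * (p - 1) = -2 := by simp only [b]; field_simp
  set K := profileConst μ a b c * c ^ |s|
  have hK : 0 ≤ K := by simp only [K, profileConst]; positivity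
  refine ⟨max 1 (K ^ (p - 1)⁻¹), by positivity, fun γ hγ ε hε => ?_⟩
  have hγ₀ : 0 < γ := zero_lt_one.trans_le (le_of_max_le_left hγ)
  have hγK : K ≤ γ ^ (p - 1) := (rpow_inv_le_iff_of_pos hK hγ₀.le hp₁).1 (le_of_max_le_right hγ)
  have hG : IsOpen {x ∈ Ω | ε < d x} := hdC.continuousOn.isOpen_inter_preimage hΩo isOpen_Ioi
  have hdG : ContDiffOn ℝ 2 d {x ∈ Ω | ε < d x} := hdC.mono fun x hx => hx.1
  have hdε : ∀ x ∈ {x ∈ Ω | ε < d x}, ε < d x := fun x hx => hx.2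
  rw [show (fun x => γ * d x ^ a * (d x - ε) ^ b) = fun x => γ * profile a b ε (d x) from
    funext fun x => mul_assoc _ _ _]
  refine ⟨contDiffOn_profile_comp hG hdG hε hdε γ, fun x hx => mul_pos hγ₀ (profile_pos hε hx.2),
    fun x hx => ?_⟩
  rw [lap_profile_comp hG hdG hε hdε γ hx]
  exact superSol_ineq_profile ha hb hε hx.2 hc₀ (hdcomp x hx.1).1 (hdcomp x hx.1).2
    (norm_nonneg _) (hdgrad x hx.1) (hdlap x hx.1) hγ₀ hγK

/-- Let `μ, s ∈ ℝ`, `p > 1` and let `(d, c)` be a regularized distance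
on `Ω`. Then there is `γ₀ > 0`, independent of `ε`, such that for every `γ ≥ γ₀` and
every `ε ≥ 0` the function `x ↦ γ·d(x)^{s/(p-1)}·(d(x)-ε)^{-2/(p-1)}` is a super-solution
of `(*)` on `{x ∈ Ω : d(x) > ε}`. -/
theorem stmt11 {N : ℕ} (hN : 2 ≤ N) (Ω : Set (EuclideanSpace ℝ (Fin N)))
    (hΩo : IsOpen Ω) (hΩne : Ω.Nonempty) (hΩb : Bornology.IsBounded Ω)
    (μ s p : ℝ) (hp : 1 < p)
    (d : EuclideanSpace ℝ (Fin N) → ℝ) (c : ℝ) (hd : RegDist Ω d c) :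
    ∃ γ₀, 0 < γ₀ ∧ ∀ γ, γ₀ ≤ γ → ∀ ε : ℝ, 0 ≤ ε →
      SuperSol Ω μ s p {x ∈ Ω | ε < d x}
        (fun x => γ * d x ^ (s / (p - 1)) * (d x - ε) ^ (-(2 / (p - 1)))) :=
  stmt11_general Ω hΩo μ s p hp d c hd
end
end
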